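/- arXiv:1803.00481 — 2 statements merged into one kernel-verified Lean document; each statement's English description precedes it below -/
import Mathlib

section
/- Under the standing assumptions, every full walk W from i to j on the trellis digraph 𝒯_{Γ(k)} that does not pass through node 1 satisfies p_𝒯(W) ≤ γ_{i,j} + (k − (n − 1))·λ*. -/
/-
Common framework for "A bound for the rank-one transient of inhomogeneous matrix
products in special case" (Kennedy-Cochran-Patrick, Sergeev, Berežný).

We work over the max-plus semiring, modelled inside `EReal` (so `⊥ = -∞` is the
max-plus zero and ordinary addition is the max-plus multiplication).  Matrices are
functions `Fin m → Fin m → EReal`.  The distinguished node "1" of the paper is the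
node `0 : Fin (n+2)` (so that `n + 2 ≥ 2` plays the role of the paper's `n ≥ 2`).

A walk is a nonempty list of nodes.  Walks on the trellis digraph of the product
`A 1 ⊗ ⋯ ⊗ A k` additionally record the level at which they start: the arc from the
`(l-1)`-st to the `l`-th node of a walk starting at level `s` has weight given by the
matrix `A (s + l)`.
-/

open scoped Classical

noncomputable section

namespace MaxPlusTransient

variable {m : ℕ}

/-- Weight of a walk on the trellis digraph, starting at level `s`. -/
def tw (M : ℕ → Fin m → Fin m → EReal) : ℕ → List (Fin m) → EReal
  | _, [] => 0
  | _, [_] => 0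
  | s, a :: b :: t => M (s + 1) a b + tw M (s + 1) (b :: t)

/-- Being a walk on the trellis digraph, starting at level `s` (all traversed arcs exist,
i.e. have weight `≠ -∞`); a walk is a nonempty list of nodes. -/
def twalk (M : ℕ → Fin m → Fin m → EReal) : ℕ → List (Fin m) → Prop
  | _, [] => False
  | _, [_] => True
  | s, a :: b :: t => M (s + 1) a b ≠ ⊥ ∧ twalk M (s + 1) (b :: t)

/-- Weight of a walk on the digraph `D_A` of a single matrix `A`. -/
def wWeight (A : Fin m → Fin m → EReal) (W : List (Fin m)) : EReal :=
  tw (fun _ => A) 0 W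

/-- Being a walk on the digraph `D_A` of a matrix `A`. -/
def isWalk (A : Fin m → Fin m → EReal) (W : List (Fin m)) : Prop :=
  twalk (fun _ => A) 0 W

/-- A path is a walk with no repeated nodes. -/
def isPath (A : Fin m → Fin m → EReal) (W : List (Fin m)) : Prop :=
  isWalk A W ∧ W.Nodup

/-- A cycle is a walk of length (number of arcs) at least one whose first and last
nodes coincide. -/
def isCycle (A : Fin m → Fin m → EReal) (W : List (Fin m)) : Prop :=
  isWalk A W ∧ 2 ≤ W.length ∧ W.head? = W.getLast?

/-- A matrix is irreducible iff its digraph is strongly connected. -/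
def irreducible (A : Fin m → Fin m → EReal) : Prop :=
  ∀ i j : Fin m, ∃ W, isWalk A W ∧ W.head? = some i ∧ W.getLast? = some j

/-- Geometric equivalence: the digraphs have the same arcs. -/
def geomEq (A B : Fin m → Fin m → EReal) : Prop :=
  ∀ i j, A i j = ⊥ ↔ B i j = ⊥

/-- Max-plus matrix product. -/
def mp (A B : Fin m → Fin m → EReal) : Fin m → Fin m → EReal :=
  fun i j => ⨆ s, A i s + B s j

/-- `Gamma M k = M 1 ⊗ M 2 ⊗ ⋯ ⊗ M k` (max-plus product), with `Gamma M 0` the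
max-plus identity matrix. -/
def Gamma (M : ℕ → Fin m → Fin m → EReal) : ℕ → Fin m → Fin m → EReal
  | 0 => fun i j => if i = j then 0 else ⊥
  | k + 1 => mp (Gamma M k) (M (k + 1))

/-- An initial walk from `i` to `one` on the trellis digraph of `M 1 ⊗ ⋯ ⊗ M k`:
it starts at node `i` at level `0`, ends at node `one` at some level `≤ k`, and the
only node of the walk equal to `one` is its final node. -/
def isInitialWalk (M : ℕ → Fin m → Fin m → EReal) (one : Fin m) (k : ℕ) (i : Fin m)
    (W : List (Fin m)) : Prop :=
  twalk M 0 W ∧ W.length - 1 ≤ k ∧ W.head? = some i ∧ W.getLast? = some one ∧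
    ∀ v ∈ W.dropLast, v ≠ one

/-- A final walk from `one` to `j` on the trellis digraph of `M 1 ⊗ ⋯ ⊗ M k`:
it starts at node `one` at some level `s`, ends at node `j` at level `k`, and the
only node of the walk equal to `one` is its first node. -/
def isFinalWalk (M : ℕ → Fin m → Fin m → EReal) (one : Fin m) (k : ℕ) (j : Fin m) (s : ℕ)
    (W : List (Fin m)) : Prop :=
  twalk M s W ∧ s + (W.length - 1) = k ∧ W.head? = some one ∧ W.getLast? = some j ∧
    ∀ v ∈ W.tail, v ≠ one

/-- A full walk from `i` to `j` on the trellis digraph of `M 1 ⊗ ⋯ ⊗ M k`: it goes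
from node `i` at level `0` to node `j` at level `k`. -/
def isFullWalk (M : ℕ → Fin m → Fin m → EReal) (k : ℕ) (i j : Fin m)
    (W : List (Fin m)) : Prop :=
  twalk M 0 W ∧ W.length = k + 1 ∧ W.head? = some i ∧ W.getLast? = some j

/-- `w_i*`: maximal weight of an initial walk from `i` to `one`. -/
def wStar (M : ℕ → Fin m → Fin m → EReal) (one : Fin m) (k : ℕ) (i : Fin m) : EReal :=
  sSup {x : EReal | ∃ W, isInitialWalk M one k i W ∧ x = tw M 0 W}

/-- `v_j*`: maximal weight of a final walk from `one` to `j`. -/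
def vStar (M : ℕ → Fin m → Fin m → EReal) (one : Fin m) (k : ℕ) (j : Fin m) : EReal :=
  sSup {x : EReal | ∃ s W, isFinalWalk M one k j s W ∧ x = tw M s W}

/-- `α_i`: maximal weight of a path on `D_A` from `i` to `one`. -/
def alphaE (A : Fin m → Fin m → EReal) (one : Fin m) (i : Fin m) : EReal :=
  sSup {x : EReal | ∃ W, isPath A W ∧ W.head? = some i ∧ W.getLast? = some one ∧
    x = wWeight A W}

/-- `β_j`: maximal weight of a path on `D_A` from `one` to `j`. -/
def betaE (A : Fin m → Fin m → EReal) (one : Fin m) (j : Fin m) : EReal :=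
  sSup {x : EReal | ∃ W, isPath A W ∧ W.head? = some one ∧ W.getLast? = some j ∧
    x = wWeight A W}

/-- `γ_{i,j}`: maximal weight of a path on `D_A` from `i` to `j` not passing through
`one` (`-∞` if no such path exists). -/
def gammaE (A : Fin m → Fin m → EReal) (one : Fin m) (i j : Fin m) : EReal :=
  sSup {x : EReal | ∃ W, isPath A W ∧ W.head? = some i ∧ W.getLast? = some j ∧
    (∀ v ∈ W, v ≠ one) ∧ x = wWeight A W}

/-- The set of mean weights of cycles of `D_A` avoiding the node `one`. -/
def lamSet (A : Fin m → Fin m → EReal) (one : Fin m) : Set ℝ :=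
  {x : ℝ | ∃ W, isCycle A W ∧ (∀ v ∈ W, v ≠ one) ∧
    ∃ r : ℝ, wWeight A W = (r : EReal) ∧ x = r / ((W.length : ℝ) - 1)}

/-- `λ*`: the supremum of the mean weights of cycles of `D_A` avoiding `one`. -/
def lamStar (A : Fin m → Fin m → EReal) (one : Fin m) : ℝ :=
  sSup (lamSet A one)

/-- `w_i`: maximal weight of a walk of length at most `k` from `i` to `one` on `D_A`. -/
def wInf (A : Fin m → Fin m → EReal) (one : Fin m) (k : ℕ) (i : Fin m) : EReal :=
  sSup {x : EReal | ∃ W, isWalk A W ∧ W.length - 1 ≤ k ∧ W.head? = some i ∧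
    W.getLast? = some one ∧ x = wWeight A W}

/-- `v_j`: maximal weight of a walk of length at most `k` from `one` to `j` on `D_A`. -/
def vInf (A : Fin m → Fin m → EReal) (one : Fin m) (k : ℕ) (j : Fin m) : EReal :=
  sSup {x : EReal | ∃ W, isWalk A W ∧ W.length - 1 ≤ k ∧ W.head? = some one ∧
    W.getLast? = some j ∧ x = wWeight A W}

/-- The standing assumptions of the paper on the set `𝒳` and its entrywise boundaries
`Asup` (supremum) and `Ainf` (infimum):
matrices of `𝒳` have no `+∞` entries, `Asup`/`Ainf` are the entrywise sup/inf,
`Asup` has no `+∞` entries and `Ainf` has no `-∞` entries where matrices of `𝒳` are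
finite; all matrices of `𝒳` and also `Ainf` are irreducible and pairwise geometrically
equivalent; every matrix of `𝒳` and also `Asup` has `(one, one)` entry `0` and all its
cycles other than (repetitions of) the loop at `one` have strictly negative (mean)
weight. -/
def Standing (𝒳 : Set (Fin m → Fin m → EReal)) (Asup Ainf : Fin m → Fin m → EReal)
    (one : Fin m) : Prop :=
  𝒳.Nonempty ∧
  (∀ X ∈ 𝒳, ∀ i j, X i j ≠ ⊤) ∧
  (∀ i j, Asup i j = ⨆ X ∈ 𝒳, X i j) ∧
  (∀ i j, Ainf i j = ⨅ X ∈ 𝒳, X i j) ∧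
  (∀ i j, Asup i j ≠ ⊤) ∧
  (∀ X ∈ 𝒳, ∀ i j, X i j ≠ ⊥ → Ainf i j ≠ ⊥) ∧
  (∀ X ∈ 𝒳, irreducible X) ∧
  irreducible Ainf ∧
  (∀ X ∈ 𝒳, geomEq X Ainf) ∧
  (∀ X ∈ 𝒳, X one one = 0) ∧
  (∀ X ∈ 𝒳, ∀ W, isCycle X W → (∃ v ∈ W, v ≠ one) → wWeight X W < 0) ∧
  Asup one one = 0 ∧
  (∀ W, isCycle Asup W → (∃ v ∈ W, v ≠ one) → wWeight Asup W < 0)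

lemma tw_const (B : Fin m → Fin m → EReal) :
    ∀ (W : List (Fin m)) (s t : ℕ), tw (fun _ => B) s W = tw (fun _ => B) t W
  | [], _, _ => rfl
  | [_], _, _ => rfl
  | a :: b :: l, s, t => by
      simp only [tw]
      rw [tw_const B (b :: l) (s + 1) (t + 1)]

lemma twalk_const (B : Fin m → Fin m → EReal) :
    ∀ (W : List (Fin m)) (s t : ℕ), twalk (fun _ => B) s W ↔ twalk (fun _ => B) t W
  | [], _, _ => Iff.rfl
  | [_], _, _ => Iff.rfl
  | a :: b :: l, s, t => by
      simp only [twalk]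
      rw [twalk_const B (b :: l) (s + 1) (t + 1)]

lemma wWeight_nil (B : Fin m → Fin m → EReal) : wWeight B [] = 0 := rfl
lemma wWeight_single (B : Fin m → Fin m → EReal) (a : Fin m) : wWeight B [a] = 0 := rfl

lemma wWeight_cons (B : Fin m → Fin m → EReal) (a b : Fin m) (l : List (Fin m)) :
    wWeight B (a :: b :: l) = B a b + wWeight B (b :: l) := by
  show tw (fun _ => B) 0 _ = _
  simp only [tw]
  rw [tw_const B (b :: l) 1 0]
  rfl

lemma isWalk_cons (B : Fin m → Fin m → EReal) (a b : Fin m) (l : List (Fin m)) :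
    isWalk B (a :: b :: l) ↔ B a b ≠ ⊥ ∧ isWalk B (b :: l) := by
  show twalk (fun _ => B) 0 _ ↔ _
  simp only [twalk]
  rw [twalk_const B (b :: l) 1 0]
  rfl

lemma wWeight_append (B : Fin m → Fin m → EReal) :
    ∀ (P : List (Fin m)) (a : Fin m) (S : List (Fin m)),
      wWeight B (P ++ a :: S) = wWeight B (P ++ [a]) + wWeight B (a :: S)
  | [], a, S => by simp [wWeight_nil, wWeight_single]
  | [p], a, S => by
      simp only [List.cons_append, List.nil_append]
      rw [wWeight_cons, wWeight_cons, wWeight_single, add_zero]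
  | p :: q :: P, a, S => by
      simp only [List.cons_append]
      rw [wWeight_cons, wWeight_cons]
      rw [show q :: (P ++ a :: S) = (q :: P) ++ a :: S from rfl,
          wWeight_append B (q :: P) a S]
      rw [show q :: (P ++ [a]) = (q :: P) ++ [a] from rfl]
      exact (add_assoc _ _ _).symm

lemma isWalk_append (B : Fin m → Fin m → EReal) :
    ∀ (P : List (Fin m)) (a : Fin m) (S : List (Fin m)),
      isWalk B (P ++ a :: S) ↔ isWalk B (P ++ [a]) ∧ isWalk B (a :: S)
  | [], a, S => by
      simp only [List.nil_append]
      exact ⟨fun h => ⟨trivial, h⟩, fun h => h.2⟩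
  | [p], a, S => by
      simp only [List.cons_append, List.nil_append]
      rw [isWalk_cons, isWalk_cons]
      constructor
      · rintro ⟨h1, h2⟩; exact ⟨⟨h1, trivial⟩, h2⟩
      · rintro ⟨⟨h1, _⟩, h2⟩; exact ⟨h1, h2⟩
  | p :: q :: P, a, S => by
      simp only [List.cons_append]
      rw [isWalk_cons, isWalk_cons]
      rw [show q :: (P ++ a :: S) = (q :: P) ++ a :: S from rfl,
          isWalk_append B (q :: P) a S]
      rw [show q :: (P ++ [a]) = (q :: P) ++ [a] from rfl]
      tauto

lemma getLast?_append_cons : ∀ (P : List (Fin m)) (a : Fin m) (S : List (Fin m)),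
    (P ++ a :: S).getLast? = (a :: S).getLast?
  | [], _, _ => rfl
  | [p], a, S => by
      simp only [List.cons_append, List.nil_append, List.getLast?_cons_cons]
  | p :: q :: P, a, S => by
      simp only [List.cons_append, List.getLast?_cons_cons]
      exact getLast?_append_cons (q :: P) a S

lemma exists_dup_split : ∀ (W : List (Fin m)), ¬ W.Nodup →
    ∃ (X : List (Fin m)) (a : Fin m) (Y Z : List (Fin m)), W = X ++ a :: (Y ++ a :: Z)
  | [], h => absurd List.nodup_nil h
  | x :: t, h => by
      rw [List.nodup_cons] at h
      push_neg at h
      by_cases hx : x ∈ t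
      · obtain ⟨Y, Z, rfl⟩ := List.append_of_mem hx
        exact ⟨[], x, Y, Z, rfl⟩
      · obtain ⟨X, a, Y, Z, rfl⟩ := exists_dup_split t (h hx)
        exact ⟨x :: X, a, Y, Z, rfl⟩

lemma wWeight_real (B : Fin m → Fin m → EReal) (hTop : ∀ i j, B i j ≠ ⊤) :
    ∀ W, isWalk B W → ∃ r : ℝ, wWeight B W = (r : EReal)
  | [], _ => ⟨0, rfl⟩
  | [_], _ => ⟨0, rfl⟩
  | a :: b :: l, hw => by
      rw [isWalk_cons] at hw
      obtain ⟨r, hr⟩ := wWeight_real B hTop (b :: l) hw.2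
      refine ⟨(B a b).toReal + r, ?_⟩
      rw [wWeight_cons, hr, EReal.coe_add]
      congr 1
      exact (EReal.coe_toReal (hTop a b) hw.1).symm

lemma tw_le (A' : ℕ → Fin m → Fin m → EReal) (B : Fin m → Fin m → EReal) :
    ∀ (W : List (Fin m)) (s : ℕ),
      (∀ l, s + 1 ≤ l → l + 1 ≤ s + W.length → ∀ x y, A' l x y ≤ B x y) →
      tw A' s W ≤ tw (fun _ => B) s W
  | [], _, _ => le_refl _
  | [_], _, _ => le_refl _
  | a :: b :: t, s, h => by
      simp only [tw]
      refine add_le_add (h (s+1) le_rfl (by simp) a b) ?_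
      exact tw_le A' B (b :: t) (s + 1) (fun l h1 h2 x y => h l (by omega) (by simp at h2 ⊢; omega) x y)

lemma twalk_mono (A' : ℕ → Fin m → Fin m → EReal) (B : Fin m → Fin m → EReal) :
    ∀ (W : List (Fin m)) (s : ℕ),
      (∀ l, s + 1 ≤ l → l + 1 ≤ s + W.length → ∀ x y, A' l x y ≤ B x y) →
      twalk A' s W → twalk (fun _ => B) s W
  | [], _, _, hw => hw
  | [_], _, _, _ => trivial
  | a :: b :: t, s, h, hw => by
      simp only [twalk] at hw ⊢
      refine ⟨fun hb => hw.1 (le_bot_iff.mp (hb ▸ h (s+1) le_rfl (by simp) a b)), ?_⟩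
      exact twalk_mono A' B (b :: t) (s + 1)
        (fun l h1 h2 x y => h l (by omega) (by simp at h2 ⊢; omega) x y) hw.2



lemma lamSet_nonpos (B : Fin m → Fin m → EReal) (one : Fin m)
    (hneg : ∀ W, isCycle B W → (∃ v ∈ W, v ≠ one) → wWeight B W < 0) :
    ∀ x ∈ lamSet B one, x ≤ 0 := by
  rintro x ⟨W, hc, havoid, r, hw, rfl⟩
  have hlen : 2 ≤ W.length := hc.2.1
  have hne : W ≠ [] := by intro h; rw [h] at hlen; simp at hlen
  obtain ⟨v, hv⟩ := List.exists_mem_of_ne_nil W hne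
  have hr : (r : EReal) < 0 := hw ▸ hneg W hc ⟨v, hv, havoid v hv⟩
  have hr' : r < 0 := by exact_mod_cast hr
  have hd : (0:ℝ) ≤ (W.length : ℝ) - 1 := by
    have : (2:ℝ) ≤ (W.length : ℝ) := by exact_mod_cast hlen
    linarith
  exact div_nonpos_iff.mpr (Or.inr ⟨hr'.le, hd⟩)

lemma lamStar_nonpos (B : Fin m → Fin m → EReal) (one : Fin m)
    (hneg : ∀ W, isCycle B W → (∃ v ∈ W, v ≠ one) → wWeight B W < 0) :
    lamStar B one ≤ 0 :=
  Real.sSup_le (lamSet_nonpos B one hneg) le_rfl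

lemma cycle_weight_le (B : Fin m → Fin m → EReal) (one : Fin m)
    (hneg : ∀ W, isCycle B W → (∃ v ∈ W, v ≠ one) → wWeight B W < 0)
    (C : List (Fin m)) (hc : isCycle B C) (havoid : ∀ v ∈ C, v ≠ one)
    (r : ℝ) (hw : wWeight B C = (r : EReal)) :
    r ≤ ((C.length : ℝ) - 1) * lamStar B one := by
  have hmem : r / ((C.length : ℝ) - 1) ∈ lamSet B one :=
    ⟨C, hc, havoid, r, hw, rfl⟩
  have hb : BddAbove (lamSet B one) := ⟨0, lamSet_nonpos B one hneg⟩
  have hle := le_csSup hb hmem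
  have hd : (0:ℝ) < (C.length : ℝ) - 1 := by
    have : (2:ℝ) ≤ (C.length : ℝ) := by exact_mod_cast hc.2.1
    linarith
  rw [div_le_iff₀ hd] at hle
  calc r ≤ lamStar B one * ((C.length : ℝ) - 1) := hle
    _ = _ := mul_comm _ _

lemma key (B : Fin m → Fin m → EReal) (one : Fin m) (n : ℕ) (hcard : m ≤ n + 2)
    (hTop : ∀ i j, B i j ≠ ⊤)
    (hneg : ∀ W, isCycle B W → (∃ v ∈ W, v ≠ one) → wWeight B W < 0)
    (g : ℝ) (i j : Fin m) (hg : (g : EReal) = gammaE B one i j) :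
    ∀ (N : ℕ) (W : List (Fin m)), W.length ≤ N → isWalk B W → W.head? = some i →
      W.getLast? = some j → (∀ v ∈ W, v ≠ one) →
      wWeight B W ≤ ((g + ((W.length : ℝ) - 1 - ((n : ℝ) + 1)) * lamStar B one : ℝ) : EReal) := by
  intro N
  induction N with
  | zero =>
      intro W hN hw _ _ _
      cases W with
      | nil => simp [isWalk, twalk] at hw
      | cons x t => simp at hN
  | succ N IH =>
      intro W hN hw hhead hlast havoid
      by_cases hnd : W.Nodup
      · -- base case: W is a path
        have hWne : W ≠ [] := by rintro rfl; exact hw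
        have hmem : wWeight B W ∈ {x : EReal | ∃ W', isPath B W' ∧ W'.head? = some i ∧
            W'.getLast? = some j ∧ (∀ v ∈ W', v ≠ one) ∧ x = wWeight B W'} :=
          ⟨W, ⟨hw, hnd⟩, hhead, hlast, havoid, rfl⟩
        have h1 : wWeight B W ≤ (g : EReal) := by rw [hg]; exact le_sSup hmem
        have hlen : W.length ≤ n + 1 := by
          have hnodup : (one :: W).Nodup := by
            rw [List.nodup_cons]
            exact ⟨fun h => havoid one h rfl, hnd⟩
          have := hnodup.length_le_card
          simp only [List.length_cons, Fintype.card_fin] at this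
          omega
        have h2 : (0:ℝ) ≤ ((W.length : ℝ) - 1 - ((n : ℝ) + 1)) * lamStar B one := by
          have ha : ((W.length : ℝ) - 1 - ((n : ℝ) + 1)) ≤ 0 := by
            have : (W.length : ℝ) ≤ (n : ℝ) + 1 := by exact_mod_cast hlen
            linarith
          have hb := lamStar_nonpos B one hneg
          nlinarith
        refine h1.trans ?_
        rw [EReal.coe_le_coe_iff]
        linarith
      · -- inductive case: extract a cycle
        obtain ⟨X, a, Y, Z, rfl⟩ := exists_dup_split _ hnd
        set W := X ++ a :: (Y ++ a :: Z) with hW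
        -- weights
        have hsplit1 : wWeight B W = wWeight B (X ++ [a]) + wWeight B (a :: (Y ++ a :: Z)) :=
          wWeight_append B X a _
        have hsplit2 : wWeight B (a :: (Y ++ a :: Z)) =
            wWeight B ((a :: Y) ++ [a]) + wWeight B (a :: Z) := by
          rw [show a :: (Y ++ a :: Z) = (a :: Y) ++ a :: Z from rfl]
          exact wWeight_append B (a :: Y) a Z
        set C := (a :: Y) ++ [a] with hC
        set W' := X ++ a :: Z with hW'
        have hsplit3 : wWeight B W' = wWeight B (X ++ [a]) + wWeight B (a :: Z) :=
          wWeight_append B X a Z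
        have hWeq : wWeight B W = wWeight B W' + wWeight B C := by
          rw [hsplit1, hsplit2, hsplit3, add_comm (wWeight B C), ← add_assoc]
        -- walks
        have hw1 : isWalk B (X ++ [a]) ∧ isWalk B (a :: (Y ++ a :: Z)) :=
          (isWalk_append B X a _).mp hw
        have hw2 : isWalk B C ∧ isWalk B (a :: Z) := by
          have := hw1.2
          rw [show a :: (Y ++ a :: Z) = (a :: Y) ++ a :: Z from rfl,
            isWalk_append B (a :: Y) a Z] at this
          exact this
        have hwalkW' : isWalk B W' := (isWalk_append B X a Z).mpr ⟨hw1.1, hw2.2⟩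
        -- cycle properties
        have hcyc : isCycle B C := by
          refine ⟨hw2.1, ?_, ?_⟩
          · simp [hC]
          · show ((a :: Y) ++ [a]).head? = ((a :: Y) ++ [a]).getLast?
            rw [List.getLast?_concat]
            rfl
        have havoidC : ∀ v ∈ C, v ≠ one := by
          intro v hv
          apply havoid
          rw [hW]
          simp only [hC, List.cons_append, List.mem_append, List.mem_cons,
            List.mem_singleton, List.not_mem_nil, or_false] at hv ⊢
          tauto
        obtain ⟨r, hr⟩ := wWeight_real B hTop C hw2.1
        have hrle : r ≤ ((C.length : ℝ) - 1) * lamStar B one :=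
          cycle_weight_le B one hneg C hcyc havoidC r hr
        -- W' properties
        have hheadW' : W'.head? = some i := by
          cases X with
          | nil => simpa [hW, hW'] using hhead
          | cons x X => simpa [hW, hW'] using hhead
        have hlastW' : W'.getLast? = some j := by
          rw [hW', getLast?_append_cons X a Z]
          rw [hW, getLast?_append_cons X a (Y ++ a :: Z),
            show a :: (Y ++ a :: Z) = (a :: Y) ++ a :: Z from rfl,
            getLast?_append_cons (a :: Y) a Z] at hlast
          exact hlast
        have havoidW' : ∀ v ∈ W', v ≠ one := by
          intro v hv
          apply havoid
          rw [hW]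
          simp only [hW', List.mem_append, List.mem_cons] at hv ⊢
          tauto
        have hlenW : W.length = X.length + Y.length + Z.length + 2 := by
          simp [hW]; omega
        have hlenW' : W'.length = X.length + Z.length + 1 := by
          simp [hW']; omega
        have hlenC : C.length = Y.length + 2 := by simp [hC]
        have hNW' : W'.length ≤ N := by omega
        have hIH := IH W' hNW' hwalkW' hheadW' hlastW' havoidW'
        rw [hWeq, hr]
        calc wWeight B W' + (r : EReal)
            ≤ ((g + ((W'.length : ℝ) - 1 - ((n : ℝ) + 1)) * lamStar B one : ℝ) : EReal)
              + ((((C.length : ℝ) - 1) * lamStar B one : ℝ) : EReal) :=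
              add_le_add hIH (by exact_mod_cast hrle)
          _ = ((g + ((W.length : ℝ) - 1 - ((n : ℝ) + 1)) * lamStar B one : ℝ) : EReal) := by
              rw [← EReal.coe_add]
              congr 1
              rw [hlenW, hlenW', hlenC]
              push_cast
              ring


/-- weight bound for full walks avoiding node `one`. -/
theorem rank_one_transient_statement10 {n : ℕ}
    (𝒳 : Set (Fin (n + 2) → Fin (n + 2) → EReal))
    (Asup Ainf : Fin (n + 2) → Fin (n + 2) → EReal)
    (hstand : Standing 𝒳 Asup Ainf 0)
    (k : ℕ) (hk : 1 ≤ k)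
    (A : ℕ → Fin (n + 2) → Fin (n + 2) → EReal)
    (hA : ∀ l, 1 ≤ l → l ≤ k → A l ∈ 𝒳)
    (hcyc : ∃ W, isCycle Asup W ∧ ∀ v ∈ W, v ≠ (0 : Fin (n + 2)))
    (i j : Fin (n + 2))
    -- `γ_{i,j}` is assumed finite here
    (g : ℝ) (hg : (g : EReal) = gammaE Asup 0 i j) :
    ∀ W, isFullWalk A k i j W → (0 : Fin (n + 2)) ∉ W →
      tw A 0 W ≤ ((g + ((k : ℝ) - ((n + 2 : ℝ) - 1)) * lamStar Asup 0 : ℝ) : EReal) := by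
  obtain ⟨hne, hXtop, hsupdef, hinfdef, hsuptop, hinfbot, hirr, hirrinf, hgeom, hXone,
    hXcyc, hsupone, hsupcyc⟩ := hstand
  have hle : ∀ l, 1 ≤ l → l ≤ k → ∀ x y, A l x y ≤ Asup x y := by
    intro l h1 h2 x y
    rw [hsupdef]
    exact le_biSup (fun X => X x y) (hA l h1 h2)
  intro W hW h0
  obtain ⟨htw, hlen, hhead, hlast⟩ := hW
  have hcond : ∀ l, 0 + 1 ≤ l → l + 1 ≤ 0 + W.length → ∀ x y, A l x y ≤ Asup x y := by
    intro l h1 h2 x y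
    exact hle l h1 (by omega) x y
  have h1 : tw A 0 W ≤ wWeight Asup W := tw_le A Asup W 0 hcond
  have h2 : isWalk Asup W := twalk_mono A Asup W 0 hcond htw
  have havoid : ∀ v ∈ W, v ≠ (0 : Fin (n + 2)) := fun v hv h => h0 (h ▸ hv)
  have h3 := key Asup 0 n le_rfl hsuptop hsupcyc g i j hg W.length W le_rfl h2 hhead
    hlast havoid
  refine h1.trans (h3.trans (le_of_eq ?_))
  rw [EReal.coe_eq_coe_iff, hlen]
  push_cast
  ring

end MaxPlusTransient
end
end

section
/- Under the standing assumptions, every full walk from i to j on the trellis digraph 𝒯_{Γ(k)} that passes through node 1 (i.e. visits some node 1:l) has weight at most w_i* + v_j*. -/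
/-
Common framework for "A bound for the rank-one transient of inhomogeneous matrix
products in special case" (Kennedy-Cochran-Patrick, Sergeev, Berežný).

We work over the max-plus semiring, modelled inside `EReal` (so `⊥ = -∞` is the
max-plus zero and ordinary addition is the max-plus multiplication).  Matrices are
functions `Fin m → Fin m → EReal`.  The distinguished node "1" of the paper is the
node `0 : Fin (n+2)` (so that `n + 2 ≥ 2` plays the role of the paper's `n ≥ 2`).

A walk is a nonempty list of nodes.  Walks on the trellis digraph of the product
`A 1 ⊗ ⋯ ⊗ A k` additionally record the level at which they start: the arc from the
`(l-1)`-st to the `l`-th node of a walk starting at level `s` has weight given by the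
matrix `A (s + l)`.
-/

open scoped Classical

noncomputable section

namespace MaxPlusTransient

variable {m : ℕ}

/-!
Cut the walk at its first and at its last visit to node `one`. The first piece is an initial
walk and the last piece a final walk, so they weigh at most `w_i*` and `v_j*`. The middle piece
is a closed walk at `one`; since every matrix of the product lies entrywise below `Asup`, it
weighs at most the same closed walk on `D_{Asup}`, which is `≤ 0`: either it visits another
node, and is then a cycle of negative weight, or it only repeats the loop of weight `0` at `one`.
-/

section Trellis

variable (M : ℕ → Fin m → Fin m → EReal)

theorem tw_append_cons (L : List (Fin m)) (x : Fin m) (R : List (Fin m)) (s : ℕ) :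
    tw M s (L ++ x :: R) = tw M s (L ++ [x]) + tw M (s + L.length) (x :: R) := by
  induction L generalizing s with
  | nil => simp [tw]
  | cons a L ih =>
    cases L with
    | nil => cases R <;> simp [tw]
    | cons b L =>
      simp only [List.cons_append, tw, List.length_cons] at ih ⊢
      rw [ih, show s + 1 + (L.length + 1) = s + (L.length + 1 + 1) by omega]
      exact (add_assoc _ _ _).symm

theorem twalk_append_cons {L : List (Fin m)} {x : Fin m} {R : List (Fin m)} {s : ℕ}
    (h : twalk M s (L ++ x :: R)) :
    twalk M s (L ++ [x]) ∧ twalk M (s + L.length) (x :: R) := by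
  induction L generalizing s with
  | nil => exact ⟨trivial, by simpa using h⟩
  | cons a L ih =>
    cases L with
    | nil =>
      cases R with
      | nil => exact ⟨h, trivial⟩
      | cons c R => exact ⟨⟨h.1, trivial⟩, h.2⟩
    | cons b L =>
      obtain ⟨hab, hrest⟩ := h
      obtain ⟨hL, hR⟩ := ih hrest
      refine ⟨⟨hab, hL⟩, ?_⟩
      simpa only [List.length_cons, show s + 1 + (L.length + 1) = s + (L.length + 1 + 1) by omega]
        using hR

theorem tw_replicate {a : Fin m} (h : ∀ l, M l a a = 0) (n s : ℕ) :
    tw M s (List.replicate n a) = 0 := by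
  induction n generalizing s with
  | zero => rfl
  | succ n ih =>
    cases n with
    | zero => rfl
    | succ n => simpa only [List.replicate_succ, tw, h, zero_add] using ih (s + 1)

variable {M} {N : Fin m → Fin m → EReal}

theorem tw_const_eq_wWeight (L : List (Fin m)) (s : ℕ) : tw (fun _ => N) s L = wWeight N L := by
  suffices ∀ s t, tw (fun _ => N) s L = tw (fun _ => N) t L from this s 0
  induction L with
  | nil => intros; rfl
  | cons a L ih =>
    intro s t
    cases L with
    | nil => rfl
    | cons b L => simp only [tw]; rw [ih (s + 1) (t + 1)]

theorem isWalk_of_twalk_const {L : List (Fin m)} {s : ℕ} (h : twalk (fun _ => N) s L) :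
    isWalk N L := by
  suffices ∀ s t, twalk (fun _ => N) s L → twalk (fun _ => N) t L from this s 0 h
  clear h
  induction L with
  | nil => intro _ _ h; exact h
  | cons a L ih =>
    intro s t h
    cases L with
    | nil => trivial
    | cons b L => exact ⟨h.1, ih (s + 1) (t + 1) h.2⟩

theorem tw_le_tw_const {L : List (Fin m)} {s : ℕ}
    (hMN : ∀ l, s < l → l < s + L.length → ∀ a b, M l a b ≤ N a b) :
    tw M s L ≤ tw (fun _ => N) s L := by
  induction L generalizing s with
  | nil => rfl
  | cons a L ih =>
    cases L with
    | nil => rfl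
    | cons b L =>
      simp only [List.length_cons] at hMN
      exact add_le_add (hMN (s + 1) (by omega) (by omega) a b)
        (ih fun l h₁ h₂ => hMN l (by omega) (by simp at h₂; omega))

theorem twalk.to_const {L : List (Fin m)} {s : ℕ}
    (hMN : ∀ l, s < l → l < s + L.length → ∀ a b, M l a b ≤ N a b) (h : twalk M s L) :
    twalk (fun _ => N) s L := by
  induction L generalizing s with
  | nil => exact h
  | cons a L ih =>
    cases L with
    | nil => trivial
    | cons b L =>
      simp only [List.length_cons] at hMN
      refine ⟨fun hN => h.1 (le_bot_iff.mp (hN ▸ hMN (s + 1) (by omega) (by omega) a b)), ?_⟩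
      exact ih (fun l h₁ h₂ => hMN l (by omega) (by simp at h₂; omega)) h.2

end Trellis

theorem exists_eq_append_cons_notMem_right {α : Type*} [DecidableEq α] {a : α} {L : List α}
    (h : a ∈ L) : ∃ P R, L = P ++ a :: R ∧ a ∉ R := by
  obtain ⟨R, P, hR, hL, -⟩ := List.exists_erase_eq (List.mem_reverse.mpr h)
  exact ⟨P.reverse, R.reverse, by simpa using congrArg List.reverse hL, by simpa using hR⟩

section Bounds

variable {M : ℕ → Fin m → Fin m → EReal} {N : Fin m → Fin m → EReal} {one : Fin m}

theorem wWeight_nonpos_of_closed (hloop : N one one = 0)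
    (hcyc : ∀ W, isCycle N W → (∃ v ∈ W, v ≠ one) → wWeight N W < 0)
    {C : List (Fin m)} (hC : isWalk N C) (hhead : C.head? = some one)
    (hlast : C.getLast? = some one) : wWeight N C ≤ 0 := by
  by_cases hv : ∃ v ∈ C, v ≠ one
  · obtain ⟨v, hvC, hv1⟩ := hv
    obtain ⟨T, rfl⟩ : ∃ T, C = one :: T := by
      cases C with
      | nil => simp at hhead
      | cons c T => simp only [List.head?_cons, Option.some.injEq] at hhead; exact ⟨T, by rw [hhead]⟩
    have hT : T ≠ [] := by rintro rfl; simp_all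
    refine (hcyc _ ⟨hC, ?_, hhead.trans hlast.symm⟩ ⟨v, hvC, hv1⟩).le
    exact Nat.succ_le_succ (List.length_pos_iff.mpr hT)
  · push Not at hv
    rw [List.eq_replicate_iff.mpr ⟨rfl, hv⟩]
    exact (tw_replicate _ (fun _ => hloop) _ _).le

theorem tw_le_vStar (hloop : N one one = 0)
    (hcyc : ∀ W, isCycle N W → (∃ v ∈ W, v ≠ one) → wWeight N W < 0)
    {k : ℕ} {j : Fin m} {s : ℕ} {Q : List (Fin m)}
    (hMN : ∀ l, s < l → l ≤ k → ∀ a b, M l a b ≤ N a b)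
    (hW : twalk M s (one :: Q)) (hlen : s + Q.length = k)
    (hlast : (one :: Q).getLast? = some j) :
    tw M s (one :: Q) ≤ vStar M one k j := by
  obtain ⟨C, R, hCR, hR⟩ := exists_eq_append_cons_notMem_right (List.mem_cons_self (a := one))
  have hlenCR := congrArg List.length hCR
  simp only [List.length_cons, List.length_append] at hlenCR
  rw [hCR] at hW hlast ⊢
  obtain ⟨hWC, hWR⟩ := twalk_append_cons M hW
  have hbd : ∀ l, s < l → l < s + (C ++ [one]).length → ∀ a b, M l a b ≤ N a b :=
    fun l h₁ h₂ => hMN l h₁ (by simp at h₂; omega)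
  have hclosed : tw M s (C ++ [one]) ≤ 0 := by
    refine (tw_le_tw_const hbd).trans ?_
    rw [tw_const_eq_wWeight]
    refine wWeight_nonpos_of_closed hloop hcyc (isWalk_of_twalk_const (hWC.to_const hbd)) ?_ ?_
    · cases C <;> simp_all
    · simp
  have hfinal : tw M (s + C.length) (one :: R) ≤ vStar M one k j := by
    refine le_sSup ⟨s + C.length, one :: R, ⟨hWR, by simp; omega, rfl, ?_, ?_⟩, rfl⟩
    · rwa [List.getLast?_append_cons] at hlast
    · rintro v hv rfl; exact hR hv
  rw [tw_append_cons]
  simpa using add_le_add hclosed hfinal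

end Bounds

theorem rank_one_transient_statement14_general {n : ℕ}
    (𝒳 : Set (Fin (n + 2) → Fin (n + 2) → EReal))
    (Asup Ainf : Fin (n + 2) → Fin (n + 2) → EReal)
    (hstand : Standing 𝒳 Asup Ainf 0)
    (k : ℕ)
    (A : ℕ → Fin (n + 2) → Fin (n + 2) → EReal)
    (hA : ∀ l, 1 ≤ l → l ≤ k → A l ∈ 𝒳)
    (i j : Fin (n + 2)) :
    ∀ W, isFullWalk A k i j W → (0 : Fin (n + 2)) ∈ W →
      tw A 0 W ≤ wStar A 0 k i + vStar A 0 k j := by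
  obtain ⟨-, -, hsup, -, -, -, -, -, -, -, -, hloop, hcyc⟩ := hstand
  have hbd : ∀ l, 0 < l → l ≤ k → ∀ a b, A l a b ≤ Asup a b := fun l h₁ h₂ a b =>
    hsup a b ▸ le_iSup₂ (f := fun X (_ : X ∈ 𝒳) => X a b) (A l) (hA l h₁ h₂)
  rintro W ⟨hW, hlen, hhead, hlast⟩ hmem
  obtain ⟨P, Q, hP, rfl, -⟩ := List.exists_erase_eq hmem
  obtain ⟨hWP, hWQ⟩ := twalk_append_cons A hW
  simp only [List.length_append, List.length_cons] at hlen
  have hinit : tw A 0 (P ++ [0]) ≤ wStar A 0 k i := by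
    refine le_sSup ⟨P ++ [0], ⟨hWP, by simp; omega, ?_, by simp, ?_⟩, rfl⟩
    · cases P <;> simpa using hhead
    · rw [List.dropLast_concat]; rintro v hv rfl; exact hP hv
  have hfinal : tw A (0 + P.length) (0 :: Q) ≤ vStar A 0 k j :=
    tw_le_vStar hloop hcyc (fun l h₁ h₂ => hbd l (by omega) h₂) hWQ (by omega)
      (by rwa [List.getLast?_append_cons] at hlast)
  rw [tw_append_cons]
  exact add_le_add hinit hfinal

/-- full walks through node `one` weigh at most `w_i* + v_j*`. -/
theorem rank_one_transient_statement14 {n : ℕ}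
    (𝒳 : Set (Fin (n + 2) → Fin (n + 2) → EReal))
    (Asup Ainf : Fin (n + 2) → Fin (n + 2) → EReal)
    (hstand : Standing 𝒳 Asup Ainf 0)
    (k : ℕ) (hk : 1 ≤ k)
    (A : ℕ → Fin (n + 2) → Fin (n + 2) → EReal)
    (hA : ∀ l, 1 ≤ l → l ≤ k → A l ∈ 𝒳)
    (i j : Fin (n + 2)) :
    ∀ W, isFullWalk A k i j W → (0 : Fin (n + 2)) ∈ W →
      tw A 0 W ≤ wStar A 0 k i + vStar A 0 k j :=
  rank_one_transient_statement14_general 𝒳 Asup Ainf hstand k A hA i j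

end MaxPlusTransient
end
end
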